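/- Let N: A → B be a quantum channel that is covariant with respect to {(U(g), V(g))}_{g∈G} for a finite group G, where {U(g)}_{g∈G} is a unitary 1-design on ℂ^{|A|}. Then the Holevo information of N satisfies χ(N) = S(N(π_A)) − min over pure states ψ on A of S(N(ψ)), where π_A = I/|A| is the maximally mixed state. -/

import Mathlib

open scoped BigOperators Kronecker ComplexOrder
open Matrix MeasureTheory Filter

noncomputable section

abbrev Mat (n : ℕ) := Matrix (Fin n) (Fin n) ℂ

/-- A density matrix: positive semidefinite with unit trace. -/
def IsDensity {ι : Type} [Fintype ι] (ρ : Matrix ι ι ℂ) : Prop :=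
  ρ.PosSemidef ∧ ρ.trace = 1

/-- The trace norm ‖M‖₁ = tr √(MᴴM). -/
def traceNorm {ι : Type} [Fintype ι] [DecidableEq ι] (M : Matrix ι ι ℂ) : ℝ :=
  (((Matrix.posSemidef_conjTranspose_mul_self M).1.eigenvectorUnitary : Matrix ι ι ℂ)
    * Matrix.diagonal (fun i =>
      ((Real.sqrt ((Matrix.posSemidef_conjTranspose_mul_self M).1.eigenvalues i) : ℝ) : ℂ))
    * (star (Matrix.posSemidef_conjTranspose_mul_self M).1.eigenvectorUnitary : Matrix ι ι ℂ)).trace.re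

/-- The rank-one operator |v⟩⟨v| associated to a vector. -/
def vecState {ι : Type} (v : ι → ℂ) : Matrix ι ι ℂ :=
  Matrix.of fun i j => v i * star (v j)

/-- Partial trace over the first tensor factor. -/
def ptraceLeft {R A : Type} [Fintype R] (M : Matrix (R × A) (R × A) ℂ) : Matrix A A ℂ :=
  Matrix.of fun a a' => ∑ r, M (r, a) (r, a')

/-- Partial trace over the second tensor factor. -/
def ptraceRight {A E : Type} [Fintype E] (M : Matrix (A × E) (A × E) ℂ) : Matrix A A ℂ :=
  Matrix.of fun a a' => ∑ e, M (a, e) (a', e)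

/-- The extension id_R ⊗ Φ of a linear map on matrices. -/
def idTensor {R A B : Type} (Φ : Matrix A A ℂ →ₗ[ℂ] Matrix B B ℂ) :
    Matrix (R × A) (R × A) ℂ →ₗ[ℂ] Matrix (R × B) (R × B) ℂ where
  toFun M := Matrix.of fun p q => Φ (Matrix.of fun a a' => M (p.1, a) (q.1, a')) p.2 q.2
  map_add' M N := by
    ext p q
    have h : (Matrix.of fun a a' => M (p.1, a) (q.1, a') + N (p.1, a) (q.1, a'))
        = (Matrix.of fun a a' => M (p.1, a) (q.1, a'))
          + (Matrix.of fun a a' => N (p.1, a) (q.1, a')) := by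
      ext a a'; simp [Matrix.add_apply]
    simp only [Matrix.of_apply, Matrix.add_apply]
    rw [h, map_add]
    simp [Matrix.add_apply]
  map_smul' c M := by
    ext p q
    have h : (Matrix.of fun a a' => c • M (p.1, a) (q.1, a'))
        = c • (Matrix.of fun a a' => M (p.1, a) (q.1, a')) := by
      ext a a'; simp [Matrix.smul_apply]
    simp only [Matrix.of_apply, Matrix.smul_apply]
    rw [h, Φ.map_smul]
    simp [Matrix.smul_apply]

/-- A linear map is completely positive and trace preserving (a quantum channel). -/
def IsCPTP {A B : Type} [Fintype A] [Fintype B] (Φ : Matrix A A ℂ →ₗ[ℂ] Matrix B B ℂ) : Prop :=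
  (∀ (r : ℕ) (M : Matrix (Fin r × A) (Fin r × A) ℂ), M.PosSemidef → (idTensor Φ M).PosSemidef)
    ∧ ∀ M : Matrix A A ℂ, (Φ M).trace = M.trace

/-- The tensor product Φ ⊗ Ψ of two linear maps on matrices. -/
def tensorMap {A B C D : Type} [Fintype A] [DecidableEq A] [Fintype C]
    (Φ : Matrix A A ℂ →ₗ[ℂ] Matrix B B ℂ) (Ψ : Matrix C C ℂ →ₗ[ℂ] Matrix D D ℂ) :
    Matrix (A × C) (A × C) ℂ →ₗ[ℂ] Matrix (B × D) (B × D) ℂ where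
  toFun M := Matrix.of fun p q => ∑ a : A, ∑ a' : A,
      Φ (Matrix.single a a' 1) p.1 q.1
        * Ψ (Matrix.of fun c c' => M (a, c) (a', c')) p.2 q.2
  map_add' M N := by
    ext p q
    have h : ∀ a a' : A, (Matrix.of fun c c' => M (a, c) (a', c') + N (a, c) (a', c'))
        = (Matrix.of fun c c' => M (a, c) (a', c'))
          + (Matrix.of fun c c' => N (a, c) (a', c')) := by
      intro a a'; ext c c'; simp [Matrix.add_apply]
    simp only [Matrix.of_apply, Matrix.add_apply]
    rw [← Finset.sum_add_distrib]
    refine Finset.sum_congr rfl fun a _ => ?_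
    rw [← Finset.sum_add_distrib]
    refine Finset.sum_congr rfl fun a' _ => ?_
    rw [h a a', map_add]
    simp [Matrix.add_apply, mul_add]
  map_smul' k M := by
    ext p q
    have h : ∀ a a' : A, (Matrix.of fun c c' => k * M (a, c) (a', c'))
        = k • (Matrix.of fun c c' => M (a, c) (a', c')) := by
      intro a a'; ext c c'; simp [Matrix.smul_apply, smul_eq_mul]
    simp only [Matrix.of_apply, Matrix.smul_apply, smul_eq_mul, RingHom.id_apply]
    rw [Finset.mul_sum]
    refine Finset.sum_congr rfl fun a _ => ?_
    rw [Finset.mul_sum]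
    refine Finset.sum_congr rfl fun a' _ => ?_
    rw [h a a', Ψ.map_smul]
    simp only [Matrix.smul_apply, smul_eq_mul]
    ring
  
/-- The n-fold tensor power Φ^{⊗n} of a linear map on matrices. -/
def powMap {A B : Type} [Fintype A] [DecidableEq A] [Fintype B] [DecidableEq B]
    (Φ : Matrix A A ℂ →ₗ[ℂ] Matrix B B ℂ) :
    (n : ℕ) → (Matrix (Fin n → A) (Fin n → A) ℂ →ₗ[ℂ] Matrix (Fin n → B) (Fin n → B) ℂ)
  | 0 => (Matrix.reindexLinearEquiv ℂ ℂ (Equiv.ofUnique (Fin 0 → A) (Fin 0 → B))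
      (Equiv.ofUnique (Fin 0 → A) (Fin 0 → B))).toLinearMap
  | (n + 1) =>
      (Matrix.reindexLinearEquiv ℂ ℂ (Fin.consEquiv fun _ : Fin (n + 1) => B).symm.symm
          (Fin.consEquiv fun _ : Fin (n + 1) => B).symm.symm).toLinearMap
        ∘ₗ tensorMap Φ (powMap Φ n)
        ∘ₗ (Matrix.reindexLinearEquiv ℂ ℂ (Fin.consEquiv fun _ : Fin (n + 1) => A).symm
          (Fin.consEquiv fun _ : Fin (n + 1) => A).symm).toLinearMap

open scoped Classical in
/-- The von Neumann entropy (base 2), via the eigenvalues of a Hermitian matrix. -/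
def vnEntropy {ι : Type} [Fintype ι] [DecidableEq ι] (ρ : Matrix ι ι ℂ) : ℝ :=
  if h : ρ.IsHermitian then ∑ i, -(h.eigenvalues i * Real.logb 2 (h.eigenvalues i)) else 0

/-- The function g(ε) = (1+ε)log₂(1+ε) − ε log₂ ε (with the convention 0·log 0 = 0). -/
def gfun (x : ℝ) : ℝ := (1 + x) * Real.logb 2 (1 + x) - x * Real.logb 2 x

/-- A finite ensemble of density matrices. -/
structure Ensemble (A : Type) [Fintype A] where
  m : ℕ
  p : Fin m → ℝ
  p_nonneg : ∀ i, 0 ≤ p i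
  p_sum : ∑ i, p i = 1
  ρ : Fin m → Matrix A A ℂ
  ρ_density : ∀ i, IsDensity (ρ i)

/-- A finite ensemble of pure states, given by unit vectors. -/
structure PureEnsemble (A : Type) [Fintype A] where
  m : ℕ
  p : Fin m → ℝ
  p_nonneg : ∀ i, 0 ≤ p i
  p_sum : ∑ i, p i = 1
  v : Fin m → (A → ℂ)
  pure : ∀ i, IsDensity (vecState (v i))

/-- The Holevo information of a (channel given as a) linear map. -/
def holevoMap {A B : Type} [Fintype A] [Fintype B] [DecidableEq B]
    (Φ : Matrix A A ℂ →ₗ[ℂ] Matrix B B ℂ) : ℝ :=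
  ⨆ e : Ensemble A,
    (vnEntropy (Φ (∑ i, (e.p i : ℂ) • e.ρ i)) - ∑ i, e.p i * vnEntropy (Φ (e.ρ i)))

/-- The classical capacity: the regularized Holevo information. -/
def classicalCapacity {A B : Type} [Fintype A] [DecidableEq A] [Fintype B] [DecidableEq B]
    (Φ : Matrix A A ℂ →ₗ[ℂ] Matrix B B ℂ) : ℝ :=
  Filter.limsup (fun n : ℕ => holevoMap (powMap Φ n) / (n : ℝ)) Filter.atTop

/-- Half the diamond norm of the difference of two maps:
the supremum over reference sizes and density inputs of half the output trace distance. -/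
def diamondDist {A B : Type} [Fintype A] [Fintype B] [DecidableEq B]
    (Φ Ψ : Matrix A A ℂ →ₗ[ℂ] Matrix B B ℂ) : ℝ :=
  ⨆ r : ℕ, ⨆ ρ : {ρ : Matrix (Fin r × A) (Fin r × A) ℂ // IsDensity ρ},
    (1 / 2) * traceNorm (idTensor Φ ρ.1 - idTensor Ψ ρ.1)

/-- The diamond norm of the difference of two maps (without the factor 1/2). -/
def diamondDistFull {A B : Type} [Fintype A] [Fintype B] [DecidableEq B]
    (Φ Ψ : Matrix A A ℂ →ₗ[ℂ] Matrix B B ℂ) : ℝ :=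
  ⨆ r : ℕ, ⨆ ρ : {ρ : Matrix (Fin r × A) (Fin r × A) ℂ // IsDensity ρ},
    traceNorm (idTensor Φ ρ.1 - idTensor Ψ ρ.1)

/-- Conjugation ρ ↦ W ρ Wᴴ as a linear map. -/
def conjMap {ι κ : Type} [Fintype ι] [Fintype κ] (W : Matrix κ ι ℂ) :
    Matrix ι ι ℂ →ₗ[ℂ] Matrix κ κ ℂ where
  toFun ρ := W * ρ * Wᴴ
  map_add' ρ σ := by simp [Matrix.mul_add, Matrix.add_mul]
  map_smul' c ρ := by simp [Matrix.mul_smul, Matrix.smul_mul]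

/-- A classical–quantum state ∑ₓ p(x) |x⟩⟨x| ⊗ ρ(x). -/
def cqState {X ι : Type} [DecidableEq X] (p : X → ℝ) (ρ : X → Matrix ι ι ℂ) :
    Matrix (X × ι) (X × ι) ℂ :=
  Matrix.of fun a b => if a.1 = b.1 then (p a.1 : ℂ) * ρ a.1 a.2 b.2 else 0

/-- A generalized divergence: a family of real functionals on pairs of matrices, one for each
finite-dimensional system, satisfying the data-processing inequality under quantum channels. -/
structure GenDivergence where
  D : ∀ {ι : Type} [Fintype ι] [DecidableEq ι], Matrix ι ι ℂ → Matrix ι ι ℂ → ℝ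
  data_proc : ∀ {ι κ : Type} [Fintype ι] [DecidableEq ι] [Fintype κ] [DecidableEq κ]
      (Λ : Matrix ι ι ℂ →ₗ[ℂ] Matrix κ κ ℂ), IsCPTP Λ →
      ∀ ρ σ : Matrix ι ι ℂ, IsDensity ρ → σ.PosSemidef → D (Λ ρ) (Λ σ) ≤ D ρ σ

/-- The direct-sum property of a generalized divergence on classical–quantum states. -/
def HasDirectSum (𝒟 : GenDivergence) : Prop :=
  ∀ {X ι : Type} [Fintype X] [DecidableEq X] [Fintype ι] [DecidableEq ι]
    (p : X → ℝ), (∀ x, 0 ≤ p x) → (∑ x, p x) = 1 →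
    ∀ (ρ σ : X → Matrix ι ι ℂ), (∀ x, IsDensity (ρ x)) → (∀ x, IsDensity (σ x)) →
    𝒟.D (cqState p ρ) (cqState p σ) = ∑ x, p x * 𝒟.D (ρ x) (σ x)

/-- The generalized channel divergence: optimization over pure inputs with reference R ≅ A. -/
def chanDiv (𝒟 : GenDivergence) {A B : Type} [Fintype A] [DecidableEq A]
    [Fintype B] [DecidableEq B] (Φ Ψ : Matrix A A ℂ →ₗ[ℂ] Matrix B B ℂ) : ℝ :=
  ⨆ v : {v : A × A → ℂ // IsDensity (vecState v)},
    𝒟.D (idTensor Φ (vecState v.1)) (idTensor Ψ (vecState v.1))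

/-- The maximally entangled state on A ⊗ A. -/
def maxEnt (A : Type) [Fintype A] [DecidableEq A] : Matrix (A × A) (A × A) ℂ :=
  vecState (fun p => if p.1 = p.2 then (((Real.sqrt (Fintype.card A))⁻¹ : ℝ) : ℂ) else 0)

/-- The Choi operator of a linear map on matrices. -/
def choi {A B : Type} [Fintype A] [DecidableEq A]
    (Φ : Matrix A A ℂ →ₗ[ℂ] Matrix B B ℂ) : Matrix (A × B) (A × B) ℂ :=
  idTensor Φ (Matrix.of fun p q => if p.1 = p.2 ∧ q.1 = q.2 then 1 else 0)

/-- Separability of a bipartite operator: a finite sum of tensor products of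
positive semidefinite operators. -/
def IsSepState {A B : Type} [Fintype A] [Fintype B]
    (M : Matrix (A × B) (A × B) ℂ) : Prop :=
  ∃ (k : ℕ) (P : Fin k → Matrix A A ℂ) (Q : Fin k → Matrix B B ℂ),
    (∀ i, (P i).PosSemidef) ∧ (∀ i, (Q i).PosSemidef) ∧ M = ∑ i, P i ⊗ₖ Q i

/-- An entanglement-breaking channel: a channel whose Choi operator is separable. -/
def IsEBChannel {A B : Type} [Fintype A] [DecidableEq A] [Fintype B]
    (Φ : Matrix A A ℂ →ₗ[ℂ] Matrix B B ℂ) : Prop :=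
  IsCPTP Φ ∧ IsSepState (choi Φ)

/-- φ is a purification (with reference system R on the left) of the state ρ. -/
def IsPurification {R A : Type} [Fintype R] [Fintype A]
    (φ : Matrix (R × A) (R × A) ℂ) (ρ : Matrix A A ℂ) : Prop :=
  (∃ v : R × A → ℂ, φ = vecState v) ∧ IsDensity φ ∧ ptraceLeft φ = ρ

/-- The channel ρ ↦ tr_E (V ρ Vᴴ) induced by an isometry V : A → B ⊗ E. -/
def dilMap {A B E : Type} [Fintype A] [Fintype B] [Fintype E]
    (V : Matrix (B × E) A ℂ) : Matrix A A ℂ →ₗ[ℂ] Matrix B B ℂ where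
  toFun ρ := ptraceRight (V * ρ * Vᴴ)
  map_add' ρ σ := by
    ext a a'
    simp [ptraceRight, Matrix.mul_add, Matrix.add_mul, Matrix.add_apply,
      Finset.sum_add_distrib]
  map_smul' c ρ := by
    ext a a'
    simp [ptraceRight, Matrix.mul_smul, Matrix.smul_mul, Matrix.smul_apply,
      Finset.mul_sum, smul_eq_mul]

/-- The complementary channel ρ ↦ tr_B (V ρ Vᴴ) induced by an isometry V : A → B ⊗ E. -/
def complMap {A B E : Type} [Fintype A] [Fintype B] [Fintype E]
    (V : Matrix (B × E) A ℂ) : Matrix A A ℂ →ₗ[ℂ] Matrix E E ℂ where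
  toFun ρ := ptraceLeft (V * ρ * Vᴴ)
  map_add' ρ σ := by
    ext a a'
    simp [ptraceLeft, Matrix.mul_add, Matrix.add_mul, Matrix.add_apply,
      Finset.sum_add_distrib]
  map_smul' c ρ := by
    ext a a'
    simp [ptraceLeft, Matrix.mul_smul, Matrix.smul_mul, Matrix.smul_apply,
      Finset.mul_sum, smul_eq_mul]

/-- A Hadamard channel: some Stinespring dilation has entanglement-breaking complement. -/
def IsHadamardChan {A B : Type} [Fintype A] [DecidableEq A] [Fintype B] [DecidableEq B]
    (Φ : Matrix A A ℂ →ₗ[ℂ] Matrix B B ℂ) : Prop :=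
  ∃ (e : ℕ) (V : Matrix (B × Fin e) A ℂ), Vᴴ * V = 1 ∧
    (∀ ρ, Φ ρ = ptraceRight (V * ρ * Vᴴ)) ∧ IsSepState (choi (complMap V))

/-- Covariance of a channel with respect to unitary representations of a group. -/
def CovariantChan {G A B : Type} [Group G] [Fintype A] [DecidableEq A]
    [Fintype B] [DecidableEq B]
    (U : G →* Matrix.unitaryGroup A ℂ) (V : G →* Matrix.unitaryGroup B ℂ)
    (Φ : Matrix A A ℂ →ₗ[ℂ] Matrix B B ℂ) : Prop :=
  ∀ (g : G) (ρ : Matrix A A ℂ),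
    (V g : Matrix B B ℂ) * Φ ρ * (V g : Matrix B B ℂ)ᴴ
      = Φ ((U g : Matrix A A ℂ) * ρ * (U g : Matrix A A ℂ)ᴴ)

/-- A unitary 1-design: averaging over the group sends every matrix to tr(ρ)·I/d. -/
def IsOneDesign {G A : Type} [Group G] [Fintype G] [Fintype A] [DecidableEq A]
    (U : G →* Matrix.unitaryGroup A ℂ) : Prop :=
  ∀ ρ : Matrix A A ℂ,
    (Fintype.card G : ℂ)⁻¹ • ∑ g, (U g : Matrix A A ℂ) * ρ * (U g : Matrix A A ℂ)ᴴ
      = (ρ.trace * (Fintype.card A : ℂ)⁻¹) • (1 : Matrix A A ℂ)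

/-- Pauli X. -/
def σX : Mat 2 := !![0, 1; 1, 0]
/-- Pauli Y. -/
def σY : Mat 2 := !![0, -Complex.I; Complex.I, 0]
/-- Pauli Z. -/
def σZ : Mat 2 := !![1, 0; 0, -1]

/-- The Pauli twirl of a qubit channel. -/
def pauliTwirl (Φ : Mat 2 →ₗ[ℂ] Mat 2) : Mat 2 →ₗ[ℂ] Mat 2 :=
  ((4 : ℂ)⁻¹) • (Φ + conjMap σX ∘ₗ Φ ∘ₗ conjMap σX + conjMap σY ∘ₗ Φ ∘ₗ conjMap σY
    + conjMap σZ ∘ₗ Φ ∘ₗ conjMap σZ)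

/-- The amplitude damping channel with damping parameter p. -/
def ampDamp (p : ℝ) : Mat 2 →ₗ[ℂ] Mat 2 :=
  conjMap (!![1, 0; 0, ((Real.sqrt (1 - p) : ℝ) : ℂ)] : Mat 2)
    + conjMap (!![0, ((Real.sqrt p : ℝ) : ℂ); 0, 0] : Mat 2)

/-- The qubit depolarizing channel with parameter p. -/
def depol (p : ℝ) : Mat 2 →ₗ[ℂ] Mat 2 :=
  (((1 - p : ℝ) : ℂ)) • LinearMap.id
    + (((p / 3 : ℝ) : ℂ)) • (conjMap σX + conjMap σY + conjMap σZ)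

/-- The Z-dephasing channel with parameter p. -/
def deph (p : ℝ) : Mat 2 →ₗ[ℂ] Mat 2 :=
  (((1 - p : ℝ) : ℂ)) • LinearMap.id + ((p : ℝ) : ℂ) • conjMap σZ

/-- The entanglement-breaking parameter: distance to the nearest EB channel. -/
def ebParam {A B : Type} [Fintype A] [DecidableEq A] [Fintype B] [DecidableEq B]
    (Φ : Matrix A A ℂ →ₗ[ℂ] Matrix B B ℂ) : ℝ :=
  ⨅ M : {M : Matrix A A ℂ →ₗ[ℂ] Matrix B B ℂ // IsEBChannel M}, diamondDist Φ M.1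

end

/-!
Covariance together with the 1-design property turns the twirl over `G` into
`N(π_A) = |G|⁻¹ ∑_g V(g) N(ρ) V(g)†` for every state `ρ`; concavity and unitary invariance of the
entropy then give `S(N(ρ)) ≤ S(N(π_A))`. Decomposing `ρ` into its eigenvectors and using
concavity again, `S(N(ρ))` is at least the minimal output entropy over pure states. These two bounds
cap `χ(N)`, and the cap is reached by the uniform ensemble on the `G`-orbit of a pure state `ψ`:
its average is `π_A` and all its output entropies equal `S(N(ψ))`.

Concavity of the entropy comes from Jensen's inequality for `x ↦ -x log x` in the eigenbasis of the
mixture, combined with the spectrum of a state majorizing its diagonal in any basis (for unitary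
`M` the matrix `|M j k|²` is doubly stochastic).
-/
open Real

theorem le_sum_mul_of_forall_le {ι : Type} [Fintype ι] {p f : ι → ℝ} {a : ℝ}
    (hp0 : ∀ i, 0 ≤ p i) (hp1 : ∑ i, p i = 1) (h : ∀ i, a ≤ f i) :
    a ≤ ∑ i, p i * f i :=
  calc a = ∑ i, p i * a := by rw [← Finset.sum_mul, hp1, one_mul]
    _ ≤ ∑ i, p i * f i := Finset.sum_le_sum fun i _ => mul_le_mul_of_nonneg_left (h i) (hp0 i)

section Majorization

variable {n : Type} [Fintype n] [DecidableEq n]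

theorem ConcaveOn.sum_le_sum_mulVec_of_mem_doublyStochastic {s : Set ℝ} {f : ℝ → ℝ}
    (hf : ConcaveOn ℝ s f) {P : Matrix n n ℝ} (hP : P ∈ doublyStochastic ℝ n) {μ : n → ℝ}
    (hμ : ∀ k, μ k ∈ s) :
    ∑ k, f (μ k) ≤ ∑ j, f ((P *ᵥ μ) j) := by
  obtain ⟨hP0, hProw, hPcol⟩ := mem_doublyStochastic_iff_sum.mp hP
  calc ∑ k, f (μ k) = ∑ j, ∑ k, P j k * f (μ k) := by
        rw [Finset.sum_comm]
        simp only [← Finset.sum_mul, hPcol, one_mul]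
    _ ≤ ∑ j, f ((P *ᵥ μ) j) := Finset.sum_le_sum fun j _ => by
        simpa [mulVec, dotProduct] using
          hf.le_map_sum (fun k _ => hP0 j k) (hProw j) (fun k _ => hμ k)

theorem normSq_mem_doublyStochastic (M : unitaryGroup n ℂ) :
    Matrix.of (fun j k => Complex.normSq ((M : Matrix n n ℂ) j k)) ∈ doublyStochastic ℝ n := by
  refine mem_doublyStochastic_iff_sum.mpr ⟨fun _ _ => Complex.normSq_nonneg _, fun j => ?_,
    fun k => ?_⟩
  · have h := congrArg (fun X => (X j j).re) (Unitary.coe_mul_star_self M)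
    simpa [Matrix.mul_apply, Complex.mul_conj] using h
  · have h := congrArg (fun X => (X k k).re) (Unitary.coe_star_mul_self M)
    simpa [Matrix.mul_apply, Complex.conj_mul', ← Complex.ofReal_pow, Complex.sq_norm] using h

theorem re_mul_diagonal_mul_conjTranspose_apply_self (M : Matrix n n ℂ) (μ : n → ℝ) (j : n) :
    ((M * diagonal (RCLike.ofReal ∘ μ : n → ℂ) * Mᴴ) j j).re
      = (Matrix.of (fun j k => Complex.normSq (M j k)) *ᵥ μ) j := by
  rw [Matrix.mul_apply, Complex.re_sum]
  simp only [Matrix.mul_diagonal, conjTranspose_apply, mulVec, dotProduct, of_apply,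
    Function.comp_apply]
  refine Finset.sum_congr rfl fun k _ => ?_
  rw [mul_right_comm, Complex.star_def, Complex.mul_conj]
  simp

end Majorization

section Entropy

variable {n : Type} [Fintype n] [DecidableEq n]

theorem Matrix.IsHermitian.vnEntropy_eq {ρ : Matrix n n ℂ} (hρ : ρ.IsHermitian) :
    vnEntropy ρ = (∑ i, negMulLog (hρ.eigenvalues i)) / log 2 := by
  rw [vnEntropy, dif_pos hρ, Finset.sum_div]
  refine Finset.sum_congr rfl fun i _ => ?_
  rw [negMulLog, logb]
  ring

theorem vnEntropy_zero : vnEntropy (0 : Matrix n n ℂ) = 0 := by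
  rw [isHermitian_zero.vnEntropy_eq, isHermitian_zero.eigenvalues_eq_zero_iff.mpr rfl]
  simp

theorem vnEntropy_unitary_conj {ρ : Matrix n n ℂ} (hρ : ρ.IsHermitian) (W : unitaryGroup n ℂ) :
    vnEntropy ((W : Matrix n n ℂ) * ρ * Wᴴ) = vnEntropy ρ := by
  have hWρ : ((W : Matrix n n ℂ) * ρ * Wᴴ).IsHermitian := isHermitian_mul_mul_conjTranspose _ hρ
  have hcharpoly : ((W : Matrix n n ℂ) * ρ * Wᴴ).charpoly = ρ.charpoly := by
    rw [charpoly_mul_comm, ← Matrix.mul_assoc, ← star_eq_conjTranspose,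
      Unitary.coe_star_mul_self, Matrix.one_mul]
  rw [hWρ.vnEntropy_eq, hρ.vnEntropy_eq, (hWρ.eigenvalues_eq_eigenvalues_iff hρ).mpr hcharpoly]

theorem Matrix.IsHermitian.eigenvalues_eq_re_diag {σ : Matrix n n ℂ} (hσ : σ.IsHermitian)
    (j : n) :
    hσ.eigenvalues j
      = (((hσ.eigenvectorUnitary : Matrix n n ℂ)ᴴ * σ * hσ.eigenvectorUnitary) j j).re := by
  have h := hσ.conjStarAlgAut_star_eigenvectorUnitary
  rw [Unitary.conjStarAlgAut_apply, Unitary.coe_star, star_star, star_eq_conjTranspose] at h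
  simp [h]

theorem Matrix.PosSemidef.sum_negMulLog_eigenvalues_le_diag {ρ : Matrix n n ℂ}
    (hρ : ρ.PosSemidef) (W : unitaryGroup n ℂ) :
    ∑ i, negMulLog (hρ.1.eigenvalues i)
      ≤ ∑ j, negMulLog (((W : Matrix n n ℂ)ᴴ * ρ * W) j j).re := by
  set M : unitaryGroup n ℂ := star W * hρ.1.eigenvectorUnitary
  have hconj : (W : Matrix n n ℂ)ᴴ * ρ * W
      = M * diagonal (RCLike.ofReal ∘ hρ.1.eigenvalues : n → ℂ) * (M : Matrix n n ℂ)ᴴ := by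
    conv_lhs => rw [hρ.1.spectral_theorem]
    simp [M, Matrix.mul_assoc, star_eq_conjTranspose]
  simp only [hconj, re_mul_diagonal_mul_conjTranspose_apply_self]
  exact concaveOn_negMulLog.sum_le_sum_mulVec_of_mem_doublyStochastic
    (normSq_mem_doublyStochastic M) fun k => hρ.eigenvalues_nonneg k

theorem sum_mul_vnEntropy_le_vnEntropy_sum {κ : Type} [Fintype κ] {p : κ → ℝ}
    (hp0 : ∀ i, 0 ≤ p i) (hp1 : ∑ i, p i = 1) {ρ : κ → Matrix n n ℂ}
    (hρ : ∀ i, (ρ i).PosSemidef) :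
    ∑ i, p i * vnEntropy (ρ i) ≤ vnEntropy (∑ i, (p i : ℂ) • ρ i) := by
  set σ := ∑ i, (p i : ℂ) • ρ i
  have hσ : σ.IsHermitian :=
    (posSemidef_sum _ fun i _ => (hρ i).smul (Complex.zero_le_real.mpr (hp0 i))).1
  set W := hσ.eigenvectorUnitary
  set q : κ → n → ℝ := fun i j => (((W : Matrix n n ℂ)ᴴ * ρ i * W) j j).re
  have hq0 : ∀ i j, 0 ≤ q i j := fun i j =>
    (Complex.nonneg_iff.mp ((hρ i).conjTranspose_mul_mul_same _).diag_nonneg).1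
  have hσq : ∀ j, hσ.eigenvalues j = ∑ i, p i * q i j := by
    intro j
    simp [hσ.eigenvalues_eq_re_diag, σ, q, W, Matrix.mul_sum, Matrix.sum_mul, Matrix.sum_apply,
      Complex.re_sum]
  rw [hσ.vnEntropy_eq]
  simp_rw [(hρ _).1.vnEntropy_eq, mul_div_assoc', ← Finset.sum_div]
  gcongr
  calc ∑ i, p i * ∑ k, negMulLog ((hρ i).1.eigenvalues k)
      ≤ ∑ i, p i * ∑ j, negMulLog (q i j) := Finset.sum_le_sum fun i _ =>
        mul_le_mul_of_nonneg_left ((hρ i).sum_negMulLog_eigenvalues_le_diag W) (hp0 i)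
    _ = ∑ j, ∑ i, p i * negMulLog (q i j) := by
        simp_rw [Finset.mul_sum]
        exact Finset.sum_comm
    _ ≤ ∑ j, negMulLog (hσ.eigenvalues j) := Finset.sum_le_sum fun j _ => by
        simpa [hσq j] using
          concaveOn_negMulLog.le_map_sum (fun i _ => hp0 i) hp1 (fun i _ => hq0 i j)

end Entropy

section Density

variable {n : Type} [Fintype n]

theorem IsDensity.nonempty {ρ : Matrix n n ℂ} (hρ : IsDensity ρ) : Nonempty n := by
  by_contra h
  rw [not_nonempty_iff] at h
  simpa [Matrix.trace] using hρ.2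

theorem IsDensity.sum_smul {κ : Type} [Fintype κ] {p : κ → ℝ} (hp0 : ∀ i, 0 ≤ p i)
    (hp1 : ∑ i, p i = 1) {ρ : κ → Matrix n n ℂ} (hρ : ∀ i, IsDensity (ρ i)) :
    IsDensity (∑ i, (p i : ℂ) • ρ i) := by
  refine ⟨posSemidef_sum _ fun i _ => (hρ i).1.smul (Complex.zero_le_real.mpr (hp0 i)), ?_⟩
  simp [Matrix.trace_sum, (hρ _).2, ← Complex.ofReal_sum, hp1]

theorem isDensity_vecState {v : n → ℂ} (hv : ∑ i, v i * star (v i) = 1) :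
    IsDensity (vecState v) :=
  ⟨posSemidef_vecMulVec_self_star v, hv⟩

variable [DecidableEq n]

theorem IsDensity.sum_eigenvalues {ρ : Matrix n n ℂ} (hρ : IsDensity ρ) :
    ∑ i, hρ.1.1.eigenvalues i = 1 := by
  apply Complex.ofReal_injective
  simpa using hρ.1.1.trace_eq_sum_eigenvalues.symm.trans hρ.2

theorem IsDensity.unitary_conj {ρ : Matrix n n ℂ} (hρ : IsDensity ρ) (W : unitaryGroup n ℂ) :
    IsDensity ((W : Matrix n n ℂ) * ρ * Wᴴ) := by
  refine ⟨hρ.1.mul_mul_conjTranspose_same _, ?_⟩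
  rw [trace_mul_cycle, ← star_eq_conjTranspose, Unitary.coe_star_mul_self, Matrix.one_mul, hρ.2]

theorem isDensity_vecState_unitary_col (W : unitaryGroup n ℂ) (k : n) :
    IsDensity (vecState fun i => (W : Matrix n n ℂ) i k) := by
  refine isDensity_vecState ?_
  have h := congrFun (congrFun (Unitary.coe_star_mul_self W) k) k
  simpa [Matrix.mul_apply, mul_comm] using h

theorem isDensity_maximallyMixed [Nonempty n] :
    IsDensity ((Fintype.card n : ℂ)⁻¹ • (1 : Matrix n n ℂ)) := by
  refine ⟨PosSemidef.one.smul (by positivity), ?_⟩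
  simp

theorem Matrix.IsHermitian.eq_sum_eigenvalues_smul_vecState {ρ : Matrix n n ℂ}
    (hρ : ρ.IsHermitian) :
    ρ = ∑ k, (hρ.eigenvalues k : ℂ)
      • vecState fun i => (hρ.eigenvectorUnitary : Matrix n n ℂ) i k := by
  ext i j
  conv_lhs => rw [hρ.spectral_theorem]
  rw [Unitary.conjStarAlgAut_apply, Matrix.mul_apply]
  simp [Matrix.mul_diagonal, Matrix.sum_apply, vecState]
  refine Finset.sum_congr rfl fun k _ => ?_
  ring

theorem vnEntropy_nonneg {ρ : Matrix n n ℂ} (hρ : IsDensity ρ) : 0 ≤ vnEntropy ρ := by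
  rw [hρ.1.1.vnEntropy_eq]
  refine div_nonneg (Finset.sum_nonneg fun i _ => negMulLog_nonneg (hρ.1.eigenvalues_nonneg i) ?_)
    (log_nonneg one_le_two)
  rw [← hρ.sum_eigenvalues]
  exact Finset.single_le_sum (fun j _ => hρ.1.eigenvalues_nonneg j) (Finset.mem_univ i)

end Density

section Channel

variable {A B : Type} [Fintype A] [Fintype B] {Φ : Matrix A A ℂ →ₗ[ℂ] Matrix B B ℂ}

theorem IsCPTP.posSemidef_map (hΦ : IsCPTP Φ) {ρ : Matrix A A ℂ} (hρ : ρ.PosSemidef) :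
    (Φ ρ).PosSemidef :=
  (hΦ.1 1 (ρ.submatrix Prod.snd Prod.snd) (hρ.submatrix _)).submatrix fun b => (0, b)

theorem IsCPTP.isDensity_map (hΦ : IsCPTP Φ) {ρ : Matrix A A ℂ} (hρ : IsDensity ρ) :
    IsDensity (Φ ρ) :=
  ⟨hΦ.posSemidef_map hρ.1, by rw [hΦ.2, hρ.2]⟩

variable [DecidableEq A] [DecidableEq B]

theorem IsCPTP.iInf_pure_le_vnEntropy_map (hΦ : IsCPTP Φ) {ρ : Matrix A A ℂ}
    (hρ : IsDensity ρ) :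
    ⨅ ψ : {v : A → ℂ // IsDensity (vecState v)}, vnEntropy (Φ (vecState ψ.1))
      ≤ vnEntropy (Φ ρ) := by
  set W := hρ.1.1.eigenvectorUnitary
  have hbdd : BddBelow (Set.range fun ψ : {v : A → ℂ // IsDensity (vecState v)} =>
      vnEntropy (Φ (vecState ψ.1))) :=
    ⟨0, Set.forall_mem_range.mpr fun ψ => vnEntropy_nonneg (hΦ.isDensity_map ψ.2)⟩
  calc _ ≤ ∑ k, hρ.1.1.eigenvalues k
          * vnEntropy (Φ (vecState fun i => (W : Matrix A A ℂ) i k)) :=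
        le_sum_mul_of_forall_le hρ.1.eigenvalues_nonneg hρ.sum_eigenvalues fun k =>
          ciInf_le hbdd ⟨_, isDensity_vecState_unitary_col W k⟩
    _ ≤ vnEntropy (∑ k, (hρ.1.1.eigenvalues k : ℂ)
          • Φ (vecState fun i => (W : Matrix A A ℂ) i k)) :=
        sum_mul_vnEntropy_le_vnEntropy_sum hρ.1.eigenvalues_nonneg hρ.sum_eigenvalues fun k =>
          (hΦ.posSemidef_map (isDensity_vecState_unitary_col W k).1)
    _ = vnEntropy (Φ ρ) := by
        conv_rhs => rw [hρ.1.1.eq_sum_eigenvalues_smul_vecState, map_sum]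
        simp only [map_smul]
        rfl

end Channel

namespace Ensemble

variable {A : Type} [Fintype A]

noncomputable def average (e : Ensemble A) : Matrix A A ℂ :=
  ∑ i, (e.p i : ℂ) • e.ρ i

theorem isDensity_average (e : Ensemble A) : IsDensity e.average :=
  IsDensity.sum_smul e.p_nonneg e.p_sum e.ρ_density

theorem nonempty (e : Ensemble A) : Nonempty A := by
  have : Nonempty (Fin e.m) := by
    by_contra h
    rw [not_nonempty_iff] at h
    simpa using e.p_sum
  exact (e.ρ_density (Classical.arbitrary _)).nonempty

noncomputable def uniform {ι : Type} [Fintype ι] [Nonempty ι] (ρ : ι → Matrix A A ℂ)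
    (hρ : ∀ i, IsDensity (ρ i)) : Ensemble A where
  m := Fintype.card ι
  p _ := (Fintype.card ι : ℝ)⁻¹
  p_nonneg _ := by positivity
  p_sum := by simp
  ρ k := ρ ((Fintype.equivFin ι).symm k)
  ρ_density _ := hρ _

end Ensemble

section Holevo

variable {A B : Type} [Fintype A] [Fintype B] [DecidableEq B]

noncomputable def holevoValue (Φ : Matrix A A ℂ →ₗ[ℂ] Matrix B B ℂ) (e : Ensemble A) : ℝ :=
  vnEntropy (Φ e.average) - ∑ i, e.p i * vnEntropy (Φ (e.ρ i))

variable {Φ : Matrix A A ℂ →ₗ[ℂ] Matrix B B ℂ} {C I : ℝ}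

theorem holevoValue_le (hC : ∀ ρ, IsDensity ρ → vnEntropy (Φ ρ) ≤ C)
    (hI : ∀ ρ, IsDensity ρ → I ≤ vnEntropy (Φ ρ)) (e : Ensemble A) :
    holevoValue Φ e ≤ C - I := by
  have h_avg := hC _ e.isDensity_average
  have h_sum := le_sum_mul_of_forall_le e.p_nonneg e.p_sum fun i => hI _ (e.ρ_density i)
  unfold holevoValue
  linarith

theorem holevoMap_le (hC : ∀ ρ, IsDensity ρ → vnEntropy (Φ ρ) ≤ C)
    (hI : ∀ ρ, IsDensity ρ → I ≤ vnEntropy (Φ ρ)) (hIC : I ≤ C) :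
    holevoMap Φ ≤ C - I :=
  Real.iSup_le (holevoValue_le hC hI) (sub_nonneg.mpr hIC)

theorem holevoValue_le_holevoMap (hC : ∀ ρ, IsDensity ρ → vnEntropy (Φ ρ) ≤ C)
    (hI : ∀ ρ, IsDensity ρ → I ≤ vnEntropy (Φ ρ)) (e : Ensemble A) :
    holevoValue Φ e ≤ holevoMap Φ :=
  le_ciSup ⟨C - I, Set.forall_mem_range.mpr (holevoValue_le hC hI)⟩ e

theorem holevoValue_uniform {ι : Type} [Fintype ι] [Nonempty ι] {ρ : ι → Matrix A A ℂ}
    (hρ : ∀ i, IsDensity (ρ i)) {s : ℝ} (hs : ∀ i, vnEntropy (Φ (ρ i)) = s) :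
    holevoValue Φ (Ensemble.uniform ρ hρ)
      = vnEntropy (Φ ((Fintype.card ι : ℂ)⁻¹ • ∑ i, ρ i)) - s := by
  set e := (Fintype.equivFin ι).symm
  change vnEntropy (Φ (∑ k, (((Fintype.card ι : ℝ)⁻¹ : ℝ) : ℂ) • ρ (e k)))
      - ∑ k, (Fintype.card ι : ℝ)⁻¹ * vnEntropy (Φ (ρ (e k))) = _
  rw [e.sum_comp (fun i => (((Fintype.card ι : ℝ)⁻¹ : ℝ) : ℂ) • ρ i),
    e.sum_comp (fun i => (Fintype.card ι : ℝ)⁻¹ * vnEntropy (Φ (ρ i)))]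
  simp [hs, ← Finset.smul_sum]

end Holevo

section Covariance

variable {G A B : Type} [Group G] [Fintype A] [DecidableEq A] [Fintype B] [DecidableEq B]
  {U : G →* unitaryGroup A ℂ} {V : G →* unitaryGroup B ℂ} {N : Matrix A A ℂ →ₗ[ℂ] Matrix B B ℂ}

theorem CovariantChan.vnEntropy_map_unitary_conj (hcov : CovariantChan U V N) (hN : IsCPTP N)
    {ρ : Matrix A A ℂ} (hρ : IsDensity ρ) (g : G) :
    vnEntropy (N ((U g : Matrix A A ℂ) * ρ * (U g : Matrix A A ℂ)ᴴ)) = vnEntropy (N ρ) := by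
  rw [← hcov g ρ, vnEntropy_unitary_conj (hN.isDensity_map hρ).1.1]

variable [Fintype G]

theorem CovariantChan.vnEntropy_map_le (hcov : CovariantChan U V N) (hN : IsCPTP N)
    (h1 : IsOneDesign U) {ρ : Matrix A A ℂ} (hρ : IsDensity ρ) :
    vnEntropy (N ρ) ≤ vnEntropy (N ((Fintype.card A : ℂ)⁻¹ • (1 : Matrix A A ℂ))) := by
  have hNρ := hN.isDensity_map hρ
  have hG : ∑ _g : G, (Fintype.card G : ℝ)⁻¹ = 1 := by simp
  calc vnEntropy (N ρ)
      = ∑ g : G, (Fintype.card G : ℝ)⁻¹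
          * vnEntropy ((V g : Matrix B B ℂ) * N ρ * (V g : Matrix B B ℂ)ᴴ) := by
        simp_rw [vnEntropy_unitary_conj hNρ.1.1, ← Finset.sum_mul, hG, one_mul]
    _ ≤ vnEntropy (∑ g : G, (((Fintype.card G : ℝ)⁻¹ : ℝ) : ℂ)
          • ((V g : Matrix B B ℂ) * N ρ * (V g : Matrix B B ℂ)ᴴ)) :=
        sum_mul_vnEntropy_le_vnEntropy_sum (fun _ => by positivity) hG fun g =>
          (hNρ.unitary_conj (V g)).1
    _ = vnEntropy (N ((Fintype.card A : ℂ)⁻¹ • (1 : Matrix A A ℂ))) := by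
        simp_rw [hcov _ ρ, ← map_smul, ← map_sum, ← Finset.smul_sum]
        rw [Complex.ofReal_inv, Complex.ofReal_natCast, h1 ρ, hρ.2, one_mul]

theorem CovariantChan.holevoValue_orbit (hcov : CovariantChan U V N) (hN : IsCPTP N)
    (h1 : IsOneDesign U) {ρ : Matrix A A ℂ} (hρ : IsDensity ρ) :
    holevoValue N (Ensemble.uniform (fun g => (U g : Matrix A A ℂ) * ρ * (U g : Matrix A A ℂ)ᴴ)
        fun g => hρ.unitary_conj (U g))
      = vnEntropy (N ((Fintype.card A : ℂ)⁻¹ • (1 : Matrix A A ℂ))) - vnEntropy (N ρ) := by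
  rw [holevoValue_uniform _ (hcov.vnEntropy_map_unitary_conj hN hρ), h1 ρ, hρ.2, one_mul]

end Covariance

/-- For a channel covariant with respect to a group whose input representation
is a unitary 1-design, χ(N) = S(N(π)) − min over pure states ψ of S(N(ψ)). -/
theorem holevo_of_covariant_oneDesign
    {G A B : Type} [Group G] [Fintype G]
    [Fintype A] [DecidableEq A] [Fintype B] [DecidableEq B]
    (U : G →* Matrix.unitaryGroup A ℂ) (V : G →* Matrix.unitaryGroup B ℂ)
    (N : Matrix A A ℂ →ₗ[ℂ] Matrix B B ℂ) (hN : IsCPTP N)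
    (hcov : CovariantChan U V N) (h1 : IsOneDesign U) :
    holevoMap N = vnEntropy (N ((Fintype.card A : ℂ)⁻¹ • (1 : Matrix A A ℂ)))
      - ⨅ ψ : {v : A → ℂ // IsDensity (vecState v)}, vnEntropy (N (vecState ψ.1)) := by
  rcases isEmpty_or_nonempty A with hA | hA
  -- no states at all, and `(Fintype.card A : ℂ)⁻¹ • 1 = 0`: both sides vanish
  · have : IsEmpty (Ensemble A) := ⟨fun e => hA.false e.nonempty.some⟩
    have : IsEmpty {v : A → ℂ // IsDensity (vecState v)} := ⟨fun ψ => hA.false ψ.2.nonempty.some⟩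
    simp [holevoMap, vnEntropy_zero]
  have hC := fun ρ (hρ : IsDensity ρ) => hcov.vnEntropy_map_le hN h1 hρ
  have hI := fun ρ (hρ : IsDensity ρ) => hN.iInf_pure_le_vnEntropy_map hρ
  refine le_antisymm (holevoMap_le hC hI ((hI _ isDensity_maximallyMixed).trans
    (hC _ isDensity_maximallyMixed))) ?_
  have : Nonempty {v : A → ℂ // IsDensity (vecState v)} :=
    ⟨⟨_, isDensity_vecState_unitary_col 1 (Classical.arbitrary A)⟩⟩
  rw [sub_le_comm]
  refine le_ciInf fun ψ => ?_
  rw [sub_le_comm, ← hcov.holevoValue_orbit hN h1 ψ.2]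
  exact holevoValue_le_holevoMap hC hI _
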